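/- arXiv:1011.3565 — 2 statements merged into one kernel-verified Lean document; each statement's English description precedes it below -/
import Mathlib

section
/- Let n ≥ 2 and for ξ > 0 define g_ξ : ℝ^n → ℝ by g_ξ(z) = (|z|^{n/(n-1)} + ξ^{n/(n-1)})^{1-n}. Then there exists a constant c(n) > 0 depending only on n such that for every M > 0 and ξ > 0: ∫_{B_M} g_ξ(z) dz ≥ c(n) · log(M^n/ξ^n + 1). -/
/-!
In polar coordinates the integral is `n |B_1| ∫_0^M r^(n-1) g_ξ(r) dr`. With `p = n/(n-1)` one has
`(r^p)^(n-1) = r^n`, so the power-mean inequality `(a + b)^(n-1) ≤ 2^(n-2) (a^(n-1) + b^(n-1))`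
gives `g_ξ(r) ≥ 2^(2-n) / (r^n + ξ^n)`, and `r^(n-1) / (r^n + ξ^n)` integrates over `(0, M)`
to `log (M^n/ξ^n + 1) / n`.
-/

open MeasureTheory Metric Set

section PolarCoordinates

variable {E F : Type*} [NormedAddCommGroup E] [NormedSpace ℝ E] [Nontrivial E]
  [FiniteDimensional ℝ E] [MeasurableSpace E] [BorelSpace E] [NormedAddCommGroup F]
  [NormedSpace ℝ F] (μ : Measure E) [μ.IsAddHaarMeasure]

theorem integral_ball_fun_norm_addHaar (f : ℝ → F) (M : ℝ) :
    ∫ x in ball (0 : E) M, f ‖x‖ ∂μ =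
      Module.finrank ℝ E • μ.real (ball 0 1) •
        ∫ y in Ioo (0 : ℝ) M, y ^ (Module.finrank ℝ E - 1) • f y := by
  have h := integral_fun_norm_addHaar μ ((Iio M).indicator f)
  have hball : (fun x : E ↦ (Iio M).indicator f ‖x‖) = (ball 0 M).indicator (f ‖·‖) := by
    ext x
    by_cases hx : ‖x‖ < M <;> simp [hx]
  have hradial : (fun y : ℝ ↦ y ^ (Module.finrank ℝ E - 1) • (Iio M).indicator f y) =
      (Iio M).indicator (fun y ↦ y ^ (Module.finrank ℝ E - 1) • f y) := by
    ext y
    by_cases hy : y < M <;> simp [hy]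
  rwa [hball, integral_indicator measurableSet_ball, hradial,
    setIntegral_indicator measurableSet_Iio, Ioi_inter_Iio] at h

end PolarCoordinates

theorem rpow_div_pred_pow_pred {n : ℕ} (hn : 1 < n) {x : ℝ} (hx : 0 ≤ x) :
    (x ^ ((n : ℝ) / (n - 1))) ^ (n - 1) = x ^ n := by
  have hn' : ((n - 1 : ℕ) : ℝ) = n - 1 := by rw [Nat.cast_sub hn.le]; simp
  rw [← Real.rpow_natCast, ← Real.rpow_mul hx, hn', div_mul_cancel₀, Real.rpow_natCast]
  have : (1 : ℝ) < n := by exact_mod_cast hn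
  linarith

theorem rpow_one_sub_natCast {x : ℝ} (hx : 0 ≤ x) {n : ℕ} (hn : 1 ≤ n) :
    x ^ (1 - (n : ℝ)) = (x ^ (n - 1))⁻¹ := by
  rw [show 1 - (n : ℝ) = -((n - 1 : ℕ) : ℝ) by rw [Nat.cast_sub hn]; ring,
    Real.rpow_neg hx, Real.rpow_natCast]

theorem inv_le_rpow_add_rpow_rpow_one_sub {n : ℕ} (hn : 1 < n) {r ξ : ℝ} (hr : 0 ≤ r)
    (hξ : 0 < ξ) :
    (2 ^ (n - 2) * (r ^ n + ξ ^ n))⁻¹ ≤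
      (r ^ ((n : ℝ) / (n - 1)) + ξ ^ ((n : ℝ) / (n - 1))) ^ (1 - (n : ℝ)) := by
  set p : ℝ := (n : ℝ) / (n - 1)
  have hsum : 0 < r ^ p + ξ ^ p := by positivity
  rw [rpow_one_sub_natCast hsum.le hn.le]
  gcongr
  calc (r ^ p + ξ ^ p) ^ (n - 1)
      ≤ 2 ^ (n - 1 - 1) * ((r ^ p) ^ (n - 1) + (ξ ^ p) ^ (n - 1)) :=
        add_pow_le (by positivity) (by positivity) _
    _ = 2 ^ (n - 2) * (r ^ n + ξ ^ n) := by
        rw [rpow_div_pred_pow_pred hn hr, rpow_div_pred_pow_pred hn hξ.le]; rfl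

theorem integral_pow_pred_div_pow_add_pow {n : ℕ} (hn : n ≠ 0) {M ξ : ℝ} (hM : 0 ≤ M)
    (hξ : 0 < ξ) :
    ∫ r in (0 : ℝ)..M, r ^ (n - 1) / (r ^ n + ξ ^ n) = Real.log (M ^ n / ξ ^ n + 1) / n := by
  have hpos : ∀ r ∈ uIcc 0 M, 0 < r ^ n + ξ ^ n := fun r hr ↦ by
    rw [uIcc_of_le hM] at hr
    have := hr.1
    positivity
  have hderiv : ∀ r ∈ uIcc 0 M, HasDerivAt (fun r ↦ Real.log (r ^ n + ξ ^ n) / n)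
      (r ^ (n - 1) / (r ^ n + ξ ^ n)) r := fun r hr ↦ by
    refine ((((hasDerivAt_pow n r).add_const (ξ ^ n)).log (hpos r hr).ne').div_const
      (n : ℝ)).congr_deriv ?_
    field_simp
  rw [intervalIntegral.integral_eq_sub_of_hasDerivAt hderiv]
  · rw [zero_pow hn, zero_add, ← sub_div, ← Real.log_div (by positivity) (by positivity),
      add_div, div_self (by positivity)]
  · refine ContinuousOn.intervalIntegrable fun r hr ↦ ?_
    exact ((continuous_pow _).continuousAt.div (by fun_prop) (hpos r hr).ne' :
      ContinuousAt (fun r : ℝ ↦ r ^ (n - 1) / (r ^ n + ξ ^ n)) r).continuousWithinAt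

theorem div_two_pow_mul_log_le_integral_pow_pred_mul_weight {n : ℕ} (hn : 1 < n) {M ξ : ℝ}
    (hM : 0 ≤ M) (hξ : 0 < ξ) :
    Real.log (M ^ n / ξ ^ n + 1) / (2 ^ (n - 2) * n) ≤
      ∫ r in Ioo (0 : ℝ) M,
        r ^ (n - 1) * (r ^ ((n : ℝ) / (n - 1)) + ξ ^ ((n : ℝ) / (n - 1))) ^ (1 - (n : ℝ)) := by
  set p : ℝ := (n : ℝ) / (n - 1)
  have hp : 0 ≤ p := div_nonneg (Nat.cast_nonneg n) (sub_nonneg.2 (by exact_mod_cast hn.le))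
  have hnonneg : ∀ r ∈ uIcc 0 M, 0 ≤ r := fun r hr ↦ (uIcc_of_le hM ▸ hr).1
  have hweight : ContinuousOn (fun r : ℝ ↦ r ^ (n - 1) * (r ^ p + ξ ^ p) ^ (1 - (n : ℝ)))
      (uIcc 0 M) := by
    refine (continuous_pow _).continuousOn.mul (ContinuousOn.rpow_const ?_ fun r hr' ↦ ?_)
    · exact ((Real.continuous_rpow_const hp).add continuous_const).continuousOn
    · have := hnonneg r hr'
      exact Or.inl (by positivity)
  rw [← integral_Ioc_eq_integral_Ioo, ← intervalIntegral.integral_of_le hM]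
  calc Real.log (M ^ n / ξ ^ n + 1) / (2 ^ (n - 2) * n)
      = (2 ^ (n - 2))⁻¹ * ∫ r in (0 : ℝ)..M, r ^ (n - 1) / (r ^ n + ξ ^ n) := by
        rw [integral_pow_pred_div_pow_add_pow (by omega) hM hξ]
        field_simp
    _ = ∫ r in (0 : ℝ)..M, r ^ (n - 1) * (2 ^ (n - 2) * (r ^ n + ξ ^ n))⁻¹ := by
        rw [← intervalIntegral.integral_const_mul]
        congr 1 with r
        rw [mul_inv]
        ring
    _ ≤ _ := by
        refine intervalIntegral.integral_mono_on hM ?_ hweight.intervalIntegrable fun r hr ↦ ?_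
        · refine ContinuousOn.intervalIntegrable ((continuous_pow _).continuousOn.mul
            (ContinuousOn.inv₀ (by fun_prop) fun r hr' ↦ ?_))
          have := hnonneg r hr'
          positivity
        · exact mul_le_mul_of_nonneg_left (inv_le_rpow_add_rpow_rpow_one_sub hn hr.1 hξ)
            (pow_nonneg hr.1 _)

theorem g_xi_log_lower_bound
    (n : ℕ) (hn : 2 ≤ n) :
    ∃ c : ℝ, 0 < c ∧ ∀ M ξ : ℝ, 0 < M → 0 < ξ →
      c * Real.log (M ^ n / ξ ^ n + 1) ≤
        ∫ z in Metric.ball (0 : EuclideanSpace ℝ (Fin n)) M,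
          (‖z‖ ^ ((n : ℝ) / (n - 1)) + ξ ^ ((n : ℝ) / (n - 1))) ^ (1 - (n : ℝ)) := by
  have : NeZero n := ⟨by omega⟩
  set V := volume.real (ball (0 : EuclideanSpace ℝ (Fin n)) 1)
  have hV : 0 < V :=
    ENNReal.toReal_pos (measure_ball_pos _ _ one_pos).ne' measure_ball_lt_top.ne
  refine ⟨V / 2 ^ (n - 2), by positivity, fun M ξ hM hξ ↦ ?_⟩
  have hpolar := integral_ball_fun_norm_addHaar (volume : Measure (EuclideanSpace ℝ (Fin n)))
    (fun r ↦ (r ^ ((n : ℝ) / (n - 1)) + ξ ^ ((n : ℝ) / (n - 1))) ^ (1 - (n : ℝ))) M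
  simp only [smul_eq_mul] at hpolar
  rw [hpolar, finrank_euclideanSpace_fin, nsmul_eq_mul]
  calc V / 2 ^ (n - 2) * Real.log (M ^ n / ξ ^ n + 1)
      = n * V * (Real.log (M ^ n / ξ ^ n + 1) / (2 ^ (n - 2) * n)) := by
        field_simp
    _ ≤ _ := by
        rw [mul_assoc]
        gcongr
        exact div_two_pow_mul_log_le_integral_pow_pred_mul_weight hn hM.le hξ
end

section
/- Let Q₀ = Q_R be a cube in ℝ^n, let A ⊂ B ⊂ Q₀ be measurable sets, and let δ ∈ (0,1). Assume: (a) |A| ≤ δ|Q₀|, and (b) for every dyadic subcube Q of Q₀ with |A ∩ Q| > δ|Q|, the predecessor (parent) cube of Q is contained in B. Then |A| ≤ δ|B|. -/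
/-!
By Lebesgue's density theorem, at almost every point `x` of `A` the set `Aᶜ` has density zero,
so the small dyadic cubes around `x` (which fill a fixed proportion of a ball around `x`) are
`δ`-dense in `A`, whereas `Q₀` is not. Hence the cube just before the first `δ`-dense one is not
`δ`-dense and, being a predecessor, lies in `B`. The maximal cubes of this kind are pairwise
disjoint, lie in `B` and cover `A` up to a null set; summing `|A ∩ Q| ≤ δ|Q|` over them gives
`|A| ≤ δ|B|`.
-/

open MeasureTheory

/-- The half-open dyadic subcube of generation `k` and index `i` of the cube with lower
corner `lo` and side length `s` in `ℝ^n`. -/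
def dyadicSubcube (n : ℕ) (lo : Fin n → ℝ) (s : ℝ) (k : ℕ) (i : Fin n → ℕ) :
    Set (EuclideanSpace ℝ (Fin n)) :=
  {x | ∀ j : Fin n, lo j + (i j : ℝ) * (s / 2 ^ k) ≤ x j ∧
    x j < lo j + ((i j : ℝ) + 1) * (s / 2 ^ k)}

open Set Filter Metric
open scoped ENNReal Topology

theorem measure_le_mul_of_ae_subset_biUnion {α ι : Type*} [MeasurableSpace α]
    {μ : Measure α} {A B : Set α} {c : ℝ≥0∞} {S : Set ι}
    {Q : ι → Set α} (hS : S.Countable) (hdisj : S.PairwiseDisjoint Q)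
    (hQ : ∀ i ∈ S, MeasurableSet (Q i)) (hAQ : A ≤ᵐ[μ] ⋃ i ∈ S, Q i)
    (hdens : ∀ i ∈ S, μ (A ∩ Q i) ≤ c * μ (Q i)) (hQB : ∀ i ∈ S, Q i ⊆ B) :
    μ A ≤ c * μ B :=
  calc μ A ≤ μ (⋃ i ∈ S, A ∩ Q i) := by
        refine measure_mono_ae (hAQ.mono fun x hx hxA => ?_)
        rw [← inter_iUnion₂]
        exact ⟨hxA, hx hxA⟩
    _ ≤ ∑' i : S, μ (A ∩ Q i) := measure_biUnion_le μ hS _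
    _ ≤ ∑' i : S, c * μ (Q i) := ENNReal.tsum_le_tsum fun i => hdens i i.2
    _ = c * μ (⋃ i ∈ S, Q i) := by rw [ENNReal.tsum_mul_left, measure_biUnion hS hdisj hQ]
    _ ≤ c * μ B := by gcongr; exact iUnion₂_subset hQB

theorem eventually_lt_measure_inter_of_tendsto_density {α ι : Type*} [PseudoMetricSpace α]
    [MeasurableSpace α] {μ : Measure α} {A : Set α} {x : α} {l : Filter ι} {Q : ι → Set α}
    {r : ι → ℝ} {K c : ℝ≥0∞}
    (hdens : Tendsto (fun r => μ (Aᶜ ∩ closedBall x r) / μ (closedBall x r)) (𝓝[>] 0) (𝓝 0))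
    (hr : Tendsto r l (𝓝[>] 0)) (hQ : ∀ i, Q i ⊆ closedBall x (r i))
    (hK : ∀ i, μ (closedBall x (r i)) ≤ K * μ (Q i)) (hK_top : K ≠ ⊤)
    (hQ₀ : ∀ i, μ (Q i) ≠ 0) (hQ_top : ∀ i, μ (Q i) ≠ ⊤) (hc : c < 1) :
    ∀ᶠ i in l, c * μ (Q i) < μ (A ∩ Q i) := by
  have hε : 1 - c ≠ 0 := (tsub_pos_of_lt hc).ne'
  have hη₀ : (1 - c) / K ≠ 0 := (ENNReal.div_pos_iff.2 ⟨hε, hK_top⟩).ne'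
  filter_upwards [hr.eventually (hdens.eventually_lt_const (pos_iff_ne_zero.2 hη₀))] with i hi
  have hball₀ : μ (closedBall x (r i)) ≠ 0 := fun h => hQ₀ i (measure_mono_null (hQ i) h)
  have hball_top : μ (closedBall x (r i)) ≠ ⊤ :=
    ne_top_of_le_ne_top (ENNReal.mul_ne_top hK_top (hQ_top i)) (hK i)
  have hsmall : μ (Q i \ A) < (1 - c) * μ (Q i) :=
    calc μ (Q i \ A) ≤ μ (Aᶜ ∩ closedBall x (r i)) :=
          measure_mono fun y hy => ⟨hy.2, hQ i hy.1⟩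
      _ < (1 - c) / K * μ (closedBall x (r i)) :=
          (ENNReal.div_lt_iff (Or.inl hball₀) (Or.inl hball_top)).1 hi
      _ ≤ (1 - c) / K * (K * μ (Q i)) := by gcongr; exact hK i
      _ = K * ((1 - c) / K) * μ (Q i) := by ring
      _ ≤ (1 - c) * μ (Q i) := by gcongr; exact ENNReal.mul_div_le
  by_contra! hle
  have hA_top : μ (A ∩ Q i) ≠ ⊤ := ne_top_of_le_ne_top (hQ_top i) (measure_mono inter_subset_right)
  refine lt_irrefl (μ (Q i)) ?_
  calc μ (Q i) ≤ μ (A ∩ Q i) + μ (Q i \ A) := by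
        rw [inter_comm]; exact measure_le_inter_add_sdiff μ _ _
    _ < c * μ (Q i) + (1 - c) * μ (Q i) := ENNReal.add_lt_add_of_le_of_lt hA_top hle hsmall
    _ = μ (Q i) := by rw [← add_mul, add_tsub_cancel_of_le hc.le, one_mul]

noncomputable def dyadicIndex {n : ℕ} (lo : Fin n → ℝ) (s : ℝ) (k : ℕ)
    (x : EuclideanSpace ℝ (Fin n)) : Fin n → ℕ :=
  fun j => ⌊(x j - lo j) / (s / 2 ^ k)⌋₊

section Dyadic

variable {n : ℕ} {lo : Fin n → ℝ} {s : ℝ} {k : ℕ} {i : Fin n → ℕ}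
  {x : EuclideanSpace ℝ (Fin n)}

theorem mem_dyadicSubcube_iff (hs : 0 < s) :
    x ∈ dyadicSubcube n lo s k i ↔ (∀ j, lo j ≤ x j) ∧ dyadicIndex lo s k x = i := by
  have hℓ : 0 < s / 2 ^ k := by positivity
  simp only [dyadicSubcube, mem_ofPred_eq, funext_iff, dyadicIndex, ← forall_and]
  refine forall_congr' fun j => ?_
  constructor
  · rintro ⟨h₁, h₂⟩
    have h₀ : lo j ≤ x j := by nlinarith [(i j).cast_nonneg (α := ℝ)]
    refine ⟨h₀, (Nat.floor_eq_iff (div_nonneg (sub_nonneg.2 h₀) hℓ.le)).2 ⟨?_, ?_⟩⟩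
    · rw [le_div_iff₀ hℓ]; linarith
    · rw [div_lt_iff₀ hℓ]; linarith
  · rintro ⟨h₀, hi⟩
    obtain ⟨h₁, h₂⟩ := (Nat.floor_eq_iff (div_nonneg (sub_nonneg.2 h₀) hℓ.le)).1 hi
    rw [le_div_iff₀ hℓ] at h₁
    rw [div_lt_iff₀ hℓ] at h₂
    constructor <;> linarith

theorem dyadicIndex_eq_of_mem (hs : 0 < s) (h : x ∈ dyadicSubcube n lo s k i) :
    dyadicIndex lo s k x = i :=
  ((mem_dyadicSubcube_iff hs).1 h).2

theorem mem_dyadicSubcube_dyadicIndex (hs : 0 < s) (hx : ∀ j, lo j ≤ x j) (k : ℕ) :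
    x ∈ dyadicSubcube n lo s k (dyadicIndex lo s k x) :=
  (mem_dyadicSubcube_iff hs).2 ⟨hx, rfl⟩

theorem dyadicIndex_add_div_two_pow (d : ℕ) (j : Fin n) :
    dyadicIndex lo s (k + d) x j / 2 ^ d = dyadicIndex lo s k x j := by
  have h : s / 2 ^ (k + d) * 2 ^ d = s / 2 ^ k := by
    rw [pow_add, ← div_div, div_mul_cancel₀ _ (pow_ne_zero _ two_ne_zero)]
  simp only [dyadicIndex]
  rw [← Nat.floor_div_natCast, Nat.cast_pow, Nat.cast_ofNat, div_div, h]

theorem dyadicIndex_eq_of_le {k' : ℕ} {y : EuclideanSpace ℝ (Fin n)} (hk : k ≤ k')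
    (h : dyadicIndex lo s k' x = dyadicIndex lo s k' y) :
    dyadicIndex lo s k x = dyadicIndex lo s k y := by
  obtain ⟨d, rfl⟩ := Nat.exists_eq_add_of_le hk
  funext j
  rw [← dyadicIndex_add_div_two_pow (x := x) d, ← dyadicIndex_add_div_two_pow (x := y) d, h]

theorem dyadicIndex_lt (hs : 0 < s) (hx : x ∈ dyadicSubcube n lo s 0 (fun _ => 0)) (j : Fin n) :
    dyadicIndex lo s k x j < 2 ^ k := by
  have h := dyadicIndex_add_div_two_pow (lo := lo) (s := s) (x := x) (k := 0) k j
  rw [zero_add, dyadicIndex_eq_of_mem hs hx, Nat.div_eq_zero_iff] at h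
  exact h.resolve_left (pow_ne_zero _ two_ne_zero)

theorem dyadicSubcube_eq_preimage :
    dyadicSubcube n lo s k i = (MeasurableEquiv.toLp 2 (Fin n → ℝ)).symm ⁻¹'
      univ.pi fun j => Ico (lo j + i j * (s / 2 ^ k)) (lo j + (i j + 1) * (s / 2 ^ k)) := by
  ext x
  simp only [dyadicSubcube, mem_ofPred_eq, MeasurableEquiv.toLp, mem_preimage, Set.mem_pi,
    mem_univ, mem_Ico, forall_const]
  rfl

theorem measurableSet_dyadicSubcube : MeasurableSet (dyadicSubcube n lo s k i) := by
  rw [dyadicSubcube_eq_preimage]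
  exact (MeasurableEquiv.toLp 2 (Fin n → ℝ)).symm.measurable
    (MeasurableSet.univ_pi fun _ => measurableSet_Ico)

theorem volume_dyadicSubcube (hs : 0 < s) :
    volume (dyadicSubcube n lo s k i) = ENNReal.ofReal ((s / 2 ^ k) ^ n) := by
  rw [dyadicSubcube_eq_preimage,
    (EuclideanSpace.volume_preserving_symm_measurableEquiv_toLp (Fin n)).measure_preimage
      (MeasurableSet.univ_pi fun _ => measurableSet_Ico).nullMeasurableSet,
    volume_pi_pi]
  simp only [Real.volume_Ico, add_sub_add_left_eq_sub, ← sub_mul, add_sub_cancel_left, one_mul,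
    Finset.prod_const, Finset.card_univ, Fintype.card_fin]
  rw [ENNReal.ofReal_pow (by positivity)]

theorem dyadicSubcube_subset_closedBall (hs : 0 ≤ s) (hx : x ∈ dyadicSubcube n lo s k i) :
    dyadicSubcube n lo s k i ⊆ closedBall x (s / 2 ^ k * √n) := by
  intro y hy
  have hcoord : ∀ j, dist (y j) (x j) ^ 2 ≤ (s / 2 ^ k) ^ 2 := fun j => by
    have := hx j
    have := hy j
    rw [Real.dist_eq, sq_abs]
    nlinarith
  have hℓ : 0 ≤ s / 2 ^ k := by positivity
  rw [mem_closedBall, EuclideanSpace.dist_eq]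
  calc √(∑ j, dist (y j) (x j) ^ 2) ≤ √(n * (s / 2 ^ k) ^ 2) := by
        gcongr
        simpa only [Finset.sum_const, Finset.card_univ, Fintype.card_fin, nsmul_eq_mul] using
          Finset.sum_le_sum (s := Finset.univ) fun j _ => hcoord j
    _ = s / 2 ^ k * √n := by rw [Real.sqrt_mul (Nat.cast_nonneg n), Real.sqrt_sq hℓ, mul_comm]

theorem exists_dense_dyadicSubcube (hn : 1 ≤ n) (hs : 0 < s) {A : Set (EuclideanSpace ℝ (Fin n))}
    {c : ℝ≥0∞} (hx : ∀ j, lo j ≤ x j)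
    (hdens : Tendsto (fun r => volume (Aᶜ ∩ closedBall x r) / volume (closedBall x r))
      (𝓝[>] 0) (𝓝 0)) (hc : c < 1) :
    ∃ k i, x ∈ dyadicSubcube n lo s k i ∧
      c * volume (dyadicSubcube n lo s k i) < volume (A ∩ dyadicSubcube n lo s k i) := by
  have hxQ := mem_dyadicSubcube_dyadicIndex hs hx
  set K : ℝ≥0∞ := ENNReal.ofReal (√n ^ n) * volume (ball (0 : EuclideanSpace ℝ (Fin n)) 1)
  have hball : ∀ k, volume (closedBall x (s / 2 ^ k * √n)) =
      K * volume (dyadicSubcube n lo s k (dyadicIndex lo s k x)) := fun k => by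
    rw [Measure.addHaar_closedBall _ _ (by positivity), finrank_euclideanSpace, Fintype.card_fin,
      volume_dyadicSubcube hs, mul_pow, ENNReal.ofReal_mul (by positivity)]
    ring
  have hr : Tendsto (fun k : ℕ => s / 2 ^ k * √n) atTop (𝓝[>] 0) := by
    refine tendsto_nhdsWithin_iff.2 ⟨?_, Eventually.of_forall fun k => by
      have : (0 : ℝ) < n := by exact_mod_cast hn
      exact mem_Ioi.2 (by positivity)⟩
    simpa using (tendsto_const_nhds.div_atTop
      (tendsto_pow_atTop_atTop_of_one_lt one_lt_two)).mul_const (√n)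
  obtain ⟨k, hk⟩ := (eventually_lt_measure_inter_of_tendsto_density hdens hr
    (fun k => dyadicSubcube_subset_closedBall hs.le (hxQ k)) (fun k => (hball k).le)
    (ENNReal.mul_ne_top ENNReal.ofReal_ne_top measure_ball_lt_top.ne)
    (fun k => by rw [volume_dyadicSubcube hs, ne_eq, ENNReal.ofReal_eq_zero, not_le]; positivity)
    (fun k => by rw [volume_dyadicSubcube hs]; exact ENNReal.ofReal_ne_top) hc).exists
  exact ⟨k, _, hxQ k, hk⟩

theorem exists_mem_dyadicSubcube_not_and_subset (hs : 0 < s) (D : ℕ → (Fin n → ℕ) → Prop)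
    {B : Set (EuclideanSpace ℝ (Fin n))} (hx : x ∈ dyadicSubcube n lo s 0 (fun _ => 0))
    (hD₀ : ¬D 0 (fun _ => 0))
    (hpred : ∀ k i, (∀ j, i j < 2 ^ (k + 1)) → D (k + 1) i →
      dyadicSubcube n lo s k (fun j => i j / 2) ⊆ B)
    (hD : ∃ k i, x ∈ dyadicSubcube n lo s k i ∧ D k i) :
    ∃ m i, x ∈ dyadicSubcube n lo s m i ∧ ¬D m i ∧ dyadicSubcube n lo s m i ⊆ B := by
  have hxQ := mem_dyadicSubcube_dyadicIndex hs ((mem_dyadicSubcube_iff hs).1 hx).1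
  obtain ⟨m, hm, hm₁⟩ := Nat.exists_not_and_succ_of_not_zero_of_exists
    (p := fun k => D k (dyadicIndex lo s k x))
    (by rwa [dyadicIndex_eq_of_mem hs hx])
    (by
      obtain ⟨k, i, hxk, hDk⟩ := hD
      exact ⟨k, dyadicIndex_eq_of_mem hs hxk ▸ hDk⟩)
  refine ⟨m, _, hxQ m, hm, ?_⟩
  have hparent : (fun j => dyadicIndex lo s (m + 1) x j / 2) = dyadicIndex lo s m x :=
    funext fun j => by simpa using dyadicIndex_add_div_two_pow (lo := lo) (s := s) (x := x) 1 j
  simpa only [hparent] using hpred m _ (fun j => dyadicIndex_lt hs hx j) hm₁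

theorem exists_pairwiseDisjoint_maximal_dyadicSubcubes (hs : 0 < s)
    (P : ℕ → (Fin n → ℕ) → Prop) {G : Set (EuclideanSpace ℝ (Fin n))}
    (hG : ∀ x ∈ G, ∃ m i, x ∈ dyadicSubcube n lo s m i ∧ P m i) :
    ∃ S : Set (ℕ × (Fin n → ℕ)), S.PairwiseDisjoint (fun p => dyadicSubcube n lo s p.1 p.2) ∧
      (∀ p ∈ S, P p.1 p.2) ∧ G ⊆ ⋃ p ∈ S, dyadicSubcube n lo s p.1 p.2 := by
  have hne : ∀ x ∈ G, {m | P m (dyadicIndex lo s m x)}.Nonempty := fun x hx => by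
    obtain ⟨m, i, hxm, hPm⟩ := hG x hx
    exact ⟨m, show P m _ from dyadicIndex_eq_of_mem hs hxm ▸ hPm⟩
  -- `τ x` is the generation of the largest cube around `x` on which `P` holds.
  set τ : EuclideanSpace ℝ (Fin n) → ℕ := fun x => sInf {m | P m (dyadicIndex lo s m x)}
  have hP : ∀ x ∈ G, P (τ x) (dyadicIndex lo s (τ x) x) := fun x hx => Nat.sInf_mem (hne x hx)
  have key : ∀ x ∈ G, ∀ y ∈ G, τ x ≤ τ y → ∀ z,
      z ∈ dyadicSubcube n lo s (τ x) (dyadicIndex lo s (τ x) x) →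
      z ∈ dyadicSubcube n lo s (τ y) (dyadicIndex lo s (τ y) y) →
      (τ x, dyadicIndex lo s (τ x) x) = (τ y, dyadicIndex lo s (τ y) y) := by
    intro x hx y hy hxy z hzx hzy
    have hyx : dyadicIndex lo s (τ x) y = dyadicIndex lo s (τ x) x := by
      rw [← dyadicIndex_eq_of_mem hs hzx]
      exact dyadicIndex_eq_of_le hxy (dyadicIndex_eq_of_mem hs hzy).symm
    have hτ : τ x = τ y := le_antisymm hxy (Nat.sInf_le (show P (τ x) _ from hyx ▸ hP x hx))
    rw [← hτ, hyx]
  refine ⟨(fun x => (τ x, dyadicIndex lo s (τ x) x)) '' G, ?_, ?_, ?_⟩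
  · rintro _ ⟨x, hx, rfl⟩ _ ⟨y, hy, rfl⟩ hxy
    refine disjoint_left.2 fun z hzx hzy => hxy ?_
    rcases le_total (τ x) (τ y) with h | h
    · exact key x hx y hy h z hzx hzy
    · exact (key y hy x hx h z hzy hzx).symm
  · rintro _ ⟨x, hx, rfl⟩
    exact hP x hx
  · intro x hx
    obtain ⟨m, i, hxm, -⟩ := hG x hx
    exact mem_biUnion (mem_image_of_mem _ hx)
      (mem_dyadicSubcube_dyadicIndex hs ((mem_dyadicSubcube_iff hs).1 hxm).1 _)

end Dyadic

theorem calderon_zygmund_ink_spots_general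
    (n : ℕ) (hn : 1 ≤ n) (lo : Fin n → ℝ) (s : ℝ) (hs : 0 < s)
    (A B : Set (EuclideanSpace ℝ (Fin n)))
    (hAmeas : MeasurableSet A)
    (hAB : A ⊆ B) (hBQ : B ⊆ dyadicSubcube n lo s 0 (fun _ => 0))
    (δ : ℝ) (hδ1 : δ < 1)
    (hA : volume A ≤ ENNReal.ofReal δ * volume (dyadicSubcube n lo s 0 (fun _ => 0)))
    (hpred : ∀ (k : ℕ) (i : Fin n → ℕ), (∀ j, i j < 2 ^ (k + 1)) →
      ENNReal.ofReal δ * volume (dyadicSubcube n lo s (k + 1) i) <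
        volume (A ∩ dyadicSubcube n lo s (k + 1) i) →
      dyadicSubcube n lo s k (fun j => i j / 2) ⊆ B) :
    volume A ≤ ENNReal.ofReal δ * volume B := by
  set D : ℕ → (Fin n → ℕ) → Prop := fun k i =>
    ENNReal.ofReal δ * volume (dyadicSubcube n lo s k i) <
      volume (A ∩ dyadicSubcube n lo s k i)
  have hA₀ : A ⊆ dyadicSubcube n lo s 0 (fun _ => 0) := hAB.trans hBQ
  have hD₀ : ¬D 0 (fun _ => 0) := by simpa [D, inter_eq_left.2 hA₀] using hA
  have hcover : A ≤ᵐ[volume] {x | ∃ m i, x ∈ dyadicSubcube n lo s m i ∧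
      ¬D m i ∧ dyadicSubcube n lo s m i ⊆ B} := by
    filter_upwards [Besicovitch.ae_tendsto_measure_inter_div_of_measurableSet volume
      hAmeas.compl] with x hx hxA
    have hxQ := hA₀ hxA
    refine exists_mem_dyadicSubcube_not_and_subset hs D hxQ hD₀ hpred
      (exists_dense_dyadicSubcube hn hs ((mem_dyadicSubcube_iff hs).1 hxQ).1 ?_
        (ENNReal.ofReal_lt_one.2 hδ1))
    rwa [indicator_of_notMem (notMem_compl_iff.2 hxA)] at hx
  obtain ⟨S, hdisj, hgood, hSG⟩ :=
    exists_pairwiseDisjoint_maximal_dyadicSubcubes hs _ fun x hx => hx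
  exact measure_le_mul_of_ae_subset_biUnion S.to_countable hdisj
    (fun _ _ => measurableSet_dyadicSubcube) (hcover.trans (Eventually.of_forall hSG))
    (fun p hp => not_lt.1 (hgood p hp).1) fun p hp => (hgood p hp).2

/-- Calderón–Zygmund growing ink-spots lemma (Lemma 7.5, Caffarelli–Cabré):
if `A ⊆ B ⊆ Q₀`, `|A| ≤ δ|Q₀|`, and whenever a dyadic subcube `Q` satisfies
`|A ∩ Q| > δ|Q|` its predecessor is contained in `B`, then `|A| ≤ δ|B|`. -/
theorem calderon_zygmund_ink_spots
    (n : ℕ) (hn : 1 ≤ n) (lo : Fin n → ℝ) (s : ℝ) (hs : 0 < s)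
    (A B : Set (EuclideanSpace ℝ (Fin n)))
    (hAmeas : MeasurableSet A) (hBmeas : MeasurableSet B)
    (hAB : A ⊆ B) (hBQ : B ⊆ dyadicSubcube n lo s 0 (fun _ => 0))
    (δ : ℝ) (hδ0 : 0 < δ) (hδ1 : δ < 1)
    (hA : volume A ≤ ENNReal.ofReal δ * volume (dyadicSubcube n lo s 0 (fun _ => 0)))
    (hpred : ∀ (k : ℕ) (i : Fin n → ℕ), (∀ j, i j < 2 ^ (k + 1)) →
      ENNReal.ofReal δ * volume (dyadicSubcube n lo s (k + 1) i) <
        volume (A ∩ dyadicSubcube n lo s (k + 1) i) →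
      dyadicSubcube n lo s k (fun j => i j / 2) ⊆ B) :
    volume A ≤ ENNReal.ofReal δ * volume B :=
  calderon_zygmund_ink_spots_general n hn lo s hs A B hAmeas hAB hBQ δ hδ1 hA hpred
end
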